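/- arXiv:1306.3410 — 2 statements merged into one kernel-verified Lean document; each statement's English description precedes it below -/
import Mathlib

section
/- Let B be a unital C*-algebra and X a Hilbert C*-module over B. Then X is full, i.e., the closure of the linear span of {⟨x,y⟩ : x,y ∈ X} equals B, if and only if there exist n ≥ 1 and x_1,…,x_n ∈ X with ∑_{k=1}^n ⟨x_k,x_k⟩ invertible in B. -/
/-!
If `u = ∑ₖ ⟪xₖ, xₖ⟫` is invertible, then every `b` equals `∑ₖ ⟪xₖ (b u⁻¹)⋆, xₖ⟫`, so the inner
products even span `B`. Conversely, if their span is dense it meets the open group of units in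
some `s = ∑ᵢ ⟪xᵢ, yᵢ⟫`; replacing `yᵢ` by `yᵢ s⁻¹` gives `1 = ∑ᵢ ⟪xᵢ, yᵢ⟫`. Positivity of
`⟪xᵢ - yᵢ, xᵢ - yᵢ⟫` then yields `2 ≤ ∑ᵢ (⟪xᵢ, xᵢ⟫ + ⟪yᵢ, yᵢ⟫)`, and an element dominating a
strictly positive one is invertible, so `(x₁, …, xₘ, y₁, …, yₘ)` is unimodular.
-/

/-- The Hilbert C⋆-module class as in the older Mathlib (`CStarModule` of Dec 2024): a right
`A`-module (action of `Aᵐᵒᵖ`) with `⟪x, y <• a⟫ = ⟪x, y⟫ * a`. -/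
class CStarModuleRight (A E : Type*) [NonUnitalSemiring A] [StarRing A]
    [Module ℂ A] [AddCommGroup E] [Module ℂ E] [PartialOrder A] [SMul Aᵐᵒᵖ E] [Norm A] [Norm E]
    extends Inner A E where
  inner_add_right {x} {y} {z} : inner x (y + z) = inner x y + inner x z
  inner_self_nonneg {x} : 0 ≤ inner x x
  inner_self {x} : inner x x = 0 ↔ x = 0
  inner_op_smul_right {a : A} {x y : E} : inner x (MulOpposite.op a • y) = inner x y * a
  inner_smul_right_complex {z : ℂ} {x} {y} : inner x (z • y) = z • inner x y
  star_inner x y : star (inner x y) = inner y x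
  norm_eq_sqrt_norm_inner_self x : ‖x‖ = √‖inner x x‖

open scoped InnerProductSpace
open MulOpposite

namespace CStarModuleRight

section Algebraic

variable {A E : Type*} [NonUnitalRing A] [StarRing A] [Module ℂ A] [PartialOrder A] [Norm A]
  [AddCommGroup E] [Module ℂ E] [SMul Aᵐᵒᵖ E] [Norm E] [CStarModuleRight A E]

def innerRightₗ (x : E) : E →ₗ[ℂ] A where
  toFun := inner A x
  map_add' _ _ := inner_add_right
  map_smul' _ _ := inner_smul_right_complex

lemma inner_zero_right (x : E) : ⟪x, 0⟫_A = 0 :=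
  (innerRightₗ x).map_zero

lemma inner_sub_right (x y z : E) : ⟪x, y - z⟫_A = ⟪x, y⟫_A - ⟪x, z⟫_A :=
  (innerRightₗ x).map_sub y z

lemma inner_sub_left (x y z : E) : ⟪x - y, z⟫_A = ⟪x, z⟫_A - ⟪y, z⟫_A := by
  rw [← star_inner, inner_sub_right, star_sub, star_inner, star_inner]

lemma inner_op_smul_left (a : A) (x y : E) : ⟪op a • x, y⟫_A = star a * ⟪x, y⟫_A := by
  rw [← star_inner, inner_op_smul_right, star_mul, star_inner]

lemma inner_add_inner_le [IsOrderedAddMonoid A] (x y : E) :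
    ⟪x, y⟫_A + ⟪y, x⟫_A ≤ ⟪x, x⟫_A + ⟪y, y⟫_A := by
  have h : 0 ≤ ⟪x - y, x - y⟫_A := inner_self_nonneg
  rw [inner_sub_left, inner_sub_right, inner_sub_right] at h
  rw [← sub_nonneg]
  convert h using 1
  abel

variable (A E) in
def innerSpan : Submodule ℂ A :=
  Submodule.span ℂ {b : A | ∃ x y : E, ⟪x, y⟫_A = b}

lemma mem_innerSpan_iff {b : A} :
    b ∈ innerSpan A E ↔ ∃ (m : ℕ) (x y : Fin m → E), ∑ i, ⟪x i, y i⟫_A = b := by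
  constructor
  · intro hb
    obtain ⟨m, c, g, rfl⟩ := Submodule.mem_span_set'.mp hb
    choose x y hxy using fun i => (g i).2
    refine ⟨m, x, fun i => c i • y i, Finset.sum_congr rfl fun i _ => ?_⟩
    rw [inner_smul_right_complex, hxy]
  · rintro ⟨m, x, y, rfl⟩
    exact Submodule.sum_mem _ fun i _ => Submodule.subset_span ⟨x i, y i, rfl⟩

end Algebraic

section Unital

variable {A E : Type*} [Ring A] [StarRing A] [Module ℂ A] [PartialOrder A] [Norm A]
  [AddCommGroup E] [Module ℂ E] [SMul Aᵐᵒᵖ E] [Norm E] [CStarModuleRight A E]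

lemma innerSpan_eq_top_of_isUnit_sum {ι : Type*} [Fintype ι] {x : ι → E}
    (hx : IsUnit (∑ k, ⟪x k, x k⟫_A)) : innerSpan A E = ⊤ := by
  obtain ⟨u, hu⟩ := hx
  refine eq_top_iff.mpr fun b _ => ?_
  have hb : b = ∑ k, ⟪op (star (b * ↑u⁻¹)) • x k, x k⟫_A := by
    simp only [inner_op_smul_left, star_star, ← Finset.mul_sum, ← hu, mul_assoc, Units.inv_mul,
      mul_one]
  rw [hb]
  exact Submodule.sum_mem _ fun k _ => Submodule.subset_span ⟨_, x k, rfl⟩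

lemma exists_fin_isUnit_sum_of_isUnit_sum {ι : Type*} [Fintype ι] {x : ι → E}
    (hx : IsUnit (∑ k, ⟪x k, x k⟫_A)) :
    ∃ n : ℕ, 1 ≤ n ∧ ∃ y : Fin n → E, IsUnit (∑ k, ⟪y k, y k⟫_A) := by
  let e := Fintype.equivFin ι
  refine ⟨Fintype.card ι + 1, Nat.le_add_left 1 _, Fin.cons 0 (x ∘ e.symm), ?_⟩
  rw [Fin.sum_univ_succ, Fin.cons_zero, inner_zero_right, zero_add]
  simp only [Fin.cons_succ, Function.comp_apply]
  rwa [e.symm.sum_comp (fun k => ⟪x k, x k⟫_A)]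

end Unital

section Analytic

variable {A E : Type*} [NormedRing A] [NormedAlgebra ℂ A] [HasSummableGeomSeries A] [StarRing A]
  [PartialOrder A] [AddCommGroup E] [Module ℂ E] [SMul Aᵐᵒᵖ E] [Norm E] [CStarModuleRight A E]

lemma exists_sum_inner_eq_one_of_dense (h : (innerSpan A E).topologicalClosure = ⊤) :
    ∃ (m : ℕ) (x y : Fin m → E), ∑ i, ⟪x i, y i⟫_A = 1 := by
  have h1 : (1 : A) ∈ (innerSpan A E).topologicalClosure := h ▸ Submodule.mem_top
  obtain ⟨s, hs, hs1⟩ := Metric.mem_closure_iff.mp h1 1 one_pos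
  rw [dist_eq_norm] at hs1
  obtain ⟨m, x, y, rfl⟩ := mem_innerSpan_iff.mp hs
  let u := Units.oneSub _ hs1
  have hu : (u : A) = ∑ i, ⟪x i, y i⟫_A := sub_sub_cancel 1 _
  refine ⟨m, x, fun i => op (↑u⁻¹ : A) • y i, ?_⟩
  simp only [inner_op_smul_right, ← Finset.sum_mul, ← hu, Units.mul_inv]

end Analytic

lemma isUnit_sum_inner_self_add_of_sum_inner_eq_one {A E : Type*} [CStarAlgebra A]
    [PartialOrder A] [StarOrderedRing A] [AddCommGroup E] [Module ℂ E] [SMul Aᵐᵒᵖ E] [Norm E]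
    [CStarModuleRight A E] {ι : Type*} [Fintype ι] {x y : ι → E}
    (h : ∑ i, ⟪x i, y i⟫_A = 1) : IsUnit (∑ i, (⟪x i, x i⟫_A + ⟪y i, y i⟫_A)) := by
  refine CStarAlgebra.isUnit_of_le 1 ?_
  calc (1 : A) ≤ 1 + star 1 := by simp
    _ = ∑ i, (⟪x i, y i⟫_A + ⟪y i, x i⟫_A) := by
      rw [← h, star_sum, Finset.sum_add_distrib]
      simp only [star_inner]
    _ ≤ _ := Finset.sum_le_sum fun i _ => inner_add_inner_le (x i) (y i)

end CStarModuleRight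

open CStarModuleRight in
theorem full_iff_exists_unimodular_tuple_general
    {B X : Type*} [CStarAlgebra B] [PartialOrder B] [StarOrderedRing B]
    [NormedAddCommGroup X] [Module ℂ X] [SMul Bᵐᵒᵖ X] [CStarModuleRight B X] :
    (Submodule.span ℂ {b : B | ∃ x y : X, (inner B x y : B) = b}).topologicalClosure = ⊤ ↔
      ∃ n : ℕ, 1 ≤ n ∧ ∃ x : Fin n → X, IsUnit (∑ k, (inner B (x k) (x k) : B)) := by
  change (innerSpan B X).topologicalClosure = ⊤ ↔ _
  constructor
  · intro hdense
    obtain ⟨m, x, y, hxy⟩ := exists_sum_inner_eq_one_of_dense hdense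
    apply exists_fin_isUnit_sum_of_isUnit_sum (x := Sum.elim x y)
    simpa only [Fintype.sum_sum_type, Sum.elim_inl, Sum.elim_inr, Finset.sum_add_distrib]
      using isUnit_sum_inner_self_add_of_sum_inner_eq_one hxy
  · rintro ⟨n, -, x, hx⟩
    rw [innerSpan_eq_top_of_isUnit_sum hx]
    exact top_unique (Submodule.le_topologicalClosure ⊤)

/-- Let `B` be a unital C⋆-algebra and `X` a Hilbert C⋆-module over `B`.
Then `X` is full (the closure of the linear span of `{⟪x, y⟫ : x, y ∈ X}` equals `B`) if and
only if there exist `n ≥ 1` and `x₁, …, xₙ ∈ X` such that `∑ₖ ⟪xₖ, xₖ⟫` is invertible in `B`. -/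
theorem full_iff_exists_unimodular_tuple
    {B X : Type*} [CStarAlgebra B] [PartialOrder B] [StarOrderedRing B]
    [NormedAddCommGroup X] [Module ℂ X] [SMul Bᵐᵒᵖ X] [CStarModuleRight B X] [CompleteSpace X] :
    (Submodule.span ℂ {b : B | ∃ x y : X, (inner B x y : B) = b}).topologicalClosure = ⊤ ↔
      ∃ n : ℕ, 1 ≤ n ∧ ∃ x : Fin n → X, IsUnit (∑ k, (inner B (x k) (x k) : B)) :=
  full_iff_exists_unimodular_tuple_general
end

section
/- Let B be a unital C*-algebra, X a Hilbert C*-module over B, x_1,…,x_n ∈ X, and u_1,…,u_r ∈ X with ∑_{k=1}^r ⟨u_k,u_k⟩ = 1, and let ε > 0. Set b₀ = ∑_{i=1}^n ⟨x_i,x_i⟩, let b = (1 − b₀/ε)⁺ be the positive part computed by continuous functional calculus in B, and put y_k = u_k·b for k = 1,…,r. Then ∑_{i=1}^n ⟨x_i,x_i⟩ + ∑_{k=1}^r ⟨y_k,y_k⟩ is invertible in B; that is, the (n+r)-tuple (x_1,…,x_n,y_1,…,y_r) is unimodular. -/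
open scoped RightActions

/-- The Hilbert C⋆-module class as it stood in Mathlib (December 2024): a right `A`-action
`x <• a` with inner product `A`-linear on the right in the second variable. -/
class RightCStarModule (A E : Type*) [NonUnitalSemiring A] [StarRing A]
    [Module ℂ A] [AddCommGroup E] [Module ℂ E] [PartialOrder A] [SMul Aᵐᵒᵖ E] [Norm A] [Norm E]
    extends Inner A E where
  inner_add_right {x} {y} {z} : inner x (y + z) = inner x y + inner x z
  inner_self_nonneg {x} : 0 ≤ inner x x
  inner_self {x} : inner x x = 0 ↔ x = 0
  inner_op_smul_right {a : A} {x y : E} : inner x (y <• a) = inner x y * a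
  inner_smul_right_complex {z : ℂ} {x} {y} : inner x (z • y) = z • inner x y
  star_inner x y : star (inner x y) = inner y x
  norm_eq_sqrt_norm_inner_self x : ‖x‖ = √‖inner x x‖

/-! Since `∑ ⟪uₖ, uₖ⟫ = 1` and `b` is self-adjoint, `∑ ⟪yₖ, yₖ⟫ = b * b`. Both `b₀` and `b` are
continuous functions of `b₀`, so `b₀ + b * b` is `f(b₀)` with `f t = t + ((1 - t / ε)⁺)²`. As
`b₀ ≥ 0`, its spectrum lies in `[0, ∞)`, where `f` is strictly positive (`f 0 = 1`); hence `f(b₀)`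
is invertible by the spectral mapping theorem. -/

namespace RightCStarModule

variable {A E : Type*} [NonUnitalSemiring A] [StarRing A] [Module ℂ A] [AddCommGroup E]
  [Module ℂ E] [PartialOrder A] [SMul Aᵐᵒᵖ E] [Norm A] [Norm E] [RightCStarModule A E]

lemma inner_op_smul_left (a : A) (x y : E) : inner A (x <• a) y = star a * inner A x y := by
  rw [← star_inner y, inner_op_smul_right, star_mul, star_inner]

lemma sum_inner_self_op_smul {ι : Type*} [Fintype ι] (u : ι → E) (a : A) :
    ∑ k, inner A (u k <• a) (u k <• a) = star a * (∑ k, inner A (u k) (u k)) * a := by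
  simp only [inner_op_smul_left, inner_op_smul_right, Finset.mul_sum, Finset.sum_mul, mul_assoc]

end RightCStarModule

section PosPart

variable {A : Type*} [CStarAlgebra A]

lemma posPart_one_sub_smul_eq_cfc (c : ℝ) (a : A) (ha : IsSelfAdjoint a := by cfc_tac) :
    (1 - c • a)⁺ = cfc (fun t : ℝ => (1 - c * t)⁺) a := by
  have h : 1 - c • a = cfc (fun t : ℝ => 1 - c * t) a := by
    rw [cfc_sub (fun _ => 1) (c * ·) a, cfc_const_mul c (fun t => t) a, cfc_const 1 a, cfc_id' ℝ a,
      map_one]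
  rw [CFC.posPart_def, cfcₙ_eq_cfc, h, ← cfc_comp' (·⁺) _ a]

lemma isUnit_add_posPart_one_sub_smul_mul_self [PartialOrder A] [StarOrderedRing A] (c : ℝ)
    {a : A} (ha : 0 ≤ a) :
    IsUnit (a + (1 - c • a)⁺ * (1 - c • a)⁺) := by
  rw [posPart_one_sub_smul_eq_cfc c a, ← cfc_mul ..]
  nth_rw 1 [← cfc_id' ℝ a]
  rw [← cfc_add .., isUnit_cfc_iff _ a]
  intro t ht
  rcases (spectrum_nonneg_of_nonneg ha ht).eq_or_lt with rfl | ht_pos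
  · simp
  · positivity

end PosPart

theorem isUnit_sum_inner_self_add_sum_inner_self_general
    {B X : Type*} [CStarAlgebra B] [PartialOrder B] [StarOrderedRing B]
    [NormedAddCommGroup X] [Module ℂ X] [SMul Bᵐᵒᵖ X] [RightCStarModule B X]
    {n r : ℕ} (x : Fin n → X) (u : Fin r → X)
    (hu : ∑ k, (inner B (u k) (u k) : B) = 1)
    (ε : ℝ)
    (b₀ : B) (hb₀ : b₀ = ∑ i, (inner B (x i) (x i) : B))
    (b : B) (hb : b = (1 - ε⁻¹ • b₀)⁺)
    (y : Fin r → X) (hy : ∀ k, y k = u k <• b) :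
    IsUnit ((∑ i, (inner B (x i) (x i) : B)) + ∑ k, (inner B (y k) (y k) : B)) := by
  have hb₀_nonneg : 0 ≤ b₀ := hb₀ ▸ Finset.sum_nonneg fun i _ => RightCStarModule.inner_self_nonneg
  have hy_sum : ∑ k, (inner B (y k) (y k) : B) = b * b := by
    rw [funext hy, RightCStarModule.sum_inner_self_op_smul, hu, mul_one,
      (hb ▸ CFC.posPart_nonneg _ : 0 ≤ b).isSelfAdjoint.star_eq]
  rw [← hb₀, hy_sum, hb]
  exact isUnit_add_posPart_one_sub_smul_mul_self ε⁻¹ hb₀_nonneg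

/-- Let `B` be a unital C⋆-algebra and `X` a Hilbert C⋆-module over `B`.
Given `x₁, …, xₙ ∈ X` and `u₁, …, u_r ∈ X` with `∑ₖ ⟪uₖ, uₖ⟫ = 1`, and `ε > 0`, set
`b₀ = ∑ᵢ ⟪xᵢ, xᵢ⟫`, `b = (1 - b₀/ε)⁺` (positive part via continuous functional calculus),
and `yₖ = uₖ · b`. Then `∑ᵢ ⟪xᵢ, xᵢ⟫ + ∑ₖ ⟪yₖ, yₖ⟫` is invertible in `B`, i.e. the tuple
`(x₁, …, xₙ, y₁, …, y_r)` is unimodular. -/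
theorem isUnit_sum_inner_self_add_sum_inner_self
    {B X : Type*} [CStarAlgebra B] [PartialOrder B] [StarOrderedRing B]
    [NormedAddCommGroup X] [Module ℂ X] [SMul Bᵐᵒᵖ X] [RightCStarModule B X] [CompleteSpace X]
    {n r : ℕ} (x : Fin n → X) (u : Fin r → X)
    (hu : ∑ k, (inner B (u k) (u k) : B) = 1)
    (ε : ℝ) (hε : 0 < ε)
    (b₀ : B) (hb₀ : b₀ = ∑ i, (inner B (x i) (x i) : B))
    (b : B) (hb : b = (1 - ε⁻¹ • b₀)⁺)
    (y : Fin r → X) (hy : ∀ k, y k = u k <• b) :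
    IsUnit ((∑ i, (inner B (x i) (x i) : B)) + ∑ k, (inner B (y k) (y k) : B)) :=
  isUnit_sum_inner_self_add_sum_inner_self_general x u hu ε b₀ hb₀ b hb y hy
end
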